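/- Let η ∈ (0,1), and suppose Q(t+1) = η·Q(t) + (1-η)Γ + P(t) with P(t) ∈ [P_min, P_max] for all t. Then for any n and any t with nT ≤ t ≤ (n+1)T - 1: Q(t)·((1-η)Γ + P(t)) ≤ η^{t-nT}·Q(nT)·((1-η)Γ + P(t)) + ((1-η^{t-nT})/(1-η))·M_B, where M_B := max{((1-η)Γ + P_min)², ((1-η)Γ + P_max)²}. -/

import Mathlib

/-!
Write `u t := (1-η)Γ + P(t)`, so `Q(t+1) = η Q(t) + u(t)` with every `u(t)` in
`[a, b] := [(1-η)Γ + P_min, (1-η)Γ + P_max]`. Unrolling the recursion from `nT` gives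
`Q(t) = η^{t-nT} Q(nT) + ∑_{i < t-nT} η^i u(t-1-i)`. Multiplied by `u(t)`, each term
`u(s) u(t)` is a product of two points of `[a, b]`, hence at most `max(a², b²)`, and the
weights `η^i` sum to `(1 - η^{t-nT})/(1 - η)`.
-/

open Finset

lemma sq_le_max_sq_of_mem_Icc {a b y : ℝ} (ha : a ≤ y) (hb : y ≤ b) :
    y ^ 2 ≤ max (a ^ 2) (b ^ 2) := by
  rcases le_max_iff.mp (abs_le_max_abs_abs ha hb) with h | h
  · exact le_max_of_le_left (sq_le_sq.mpr h)
  · exact le_max_of_le_right (sq_le_sq.mpr h)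

lemma mul_le_max_sq_of_mem_Icc {a b x y : ℝ} (hxa : a ≤ x) (hxb : x ≤ b) (hya : a ≤ y)
    (hyb : y ≤ b) : x * y ≤ max (a ^ 2) (b ^ 2) := by
  nlinarith [sq_nonneg (x - y), sq_le_max_sq_of_mem_Icc hxa hxb, sq_le_max_sq_of_mem_Icc hya hyb]

lemma mul_le_pow_mul_add_geom_sum_mul_of_recurrence {η c M : ℝ} {Q u : ℕ → ℝ} (hη : 0 ≤ η)
    (hrec : ∀ t, Q (t + 1) = η * Q t + u t) (hu : ∀ t, u t * c ≤ M) (m d : ℕ) :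
    Q (m + d) * c ≤ η ^ d * Q m * c + (∑ i ∈ range d, η ^ i) * M := by
  induction d with
  | zero => simp
  | succ d ih =>
    calc Q (m + (d + 1)) * c = η * (Q (m + d) * c) + u (m + d) * c := by
          rw [← add_assoc, hrec]; ring
      _ ≤ η * (η ^ d * Q m * c + (∑ i ∈ range d, η ^ i) * M) + M := by
          gcongr
          exact hu _
      _ = η ^ (d + 1) * Q m * c + (∑ i ∈ range (d + 1), η ^ i) * M := by
          rw [geom_sum_succ]; ring

theorem stmt_10_general (η Γ Pmin Pmax : ℝ) (T : ℕ) (Q P : ℕ → ℝ)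
    (hη0 : 0 < η) (hη1 : η < 1)
    (hrec : ∀ t, Q (t + 1) = η * Q t + (1 - η) * Γ + P t)
    (hP : ∀ t, Pmin ≤ P t ∧ P t ≤ Pmax) :
    ∀ n t, n * T ≤ t → t ≤ (n + 1) * T - 1 →
      Q t * ((1 - η) * Γ + P t)
        ≤ η ^ (t - n * T) * Q (n * T) * ((1 - η) * Γ + P t)
          + ((1 - η ^ (t - n * T)) / (1 - η)) *
            max (((1 - η) * Γ + Pmin) ^ 2) (((1 - η) * Γ + Pmax) ^ 2) := by
  intro n t hnt _
  have hrec' : ∀ s, Q (s + 1) = η * Q s + ((1 - η) * Γ + P s) := fun s => by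
    rw [hrec]; ring
  have hu : ∀ s, ((1 - η) * Γ + P s) * ((1 - η) * Γ + P t)
      ≤ max (((1 - η) * Γ + Pmin) ^ 2) (((1 - η) * Γ + Pmax) ^ 2) := fun s =>
    mul_le_max_sq_of_mem_Icc (by linarith [hP s]) (by linarith [hP s]) (by linarith [hP t])
      (by linarith [hP t])
  have hgeom : ∑ i ∈ range (t - n * T), η ^ i = (1 - η ^ (t - n * T)) / (1 - η) := by
    rw [geom_sum_eq hη1.ne, ← neg_div_neg_eq, neg_sub, neg_sub]
  have key := mul_le_pow_mul_add_geom_sum_mul_of_recurrence hη0.le hrec' hu (n * T) (t - n * T)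
  rwa [Nat.add_sub_cancel' hnt, hgeom] at key

/-- Stale-queue error bound in the two-scale drift analysis: for
`nT ≤ t ≤ (n+1)T - 1`,
`Q(t)·((1-η)Γ + P(t)) ≤ η^{t-nT}·Q(nT)·((1-η)Γ + P(t)) + ((1-η^{t-nT})/(1-η))·M_B`. -/
theorem stmt_10 (η Γ Pmin Pmax : ℝ) (T : ℕ) (Q P : ℕ → ℝ)
    (hη0 : 0 < η) (hη1 : η < 1) (hT : 1 ≤ T)
    (hrec : ∀ t, Q (t + 1) = η * Q t + (1 - η) * Γ + P t)
    (hP : ∀ t, Pmin ≤ P t ∧ P t ≤ Pmax) :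
    ∀ n t, n * T ≤ t → t ≤ (n + 1) * T - 1 →
      Q t * ((1 - η) * Γ + P t)
        ≤ η ^ (t - n * T) * Q (n * T) * ((1 - η) * Γ + P t)
          + ((1 - η ^ (t - n * T)) / (1 - η)) *
            max (((1 - η) * Γ + Pmin) ^ 2) (((1 - η) * Γ + Pmax) ^ 2) :=
  stmt_10_general η Γ Pmin Pmax T Q P hη0 hη1 hrec hP
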